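/- arXiv:1703.10989 — 2 statements merged into one kernel-verified Lean document; each statement's English description precedes it below -/
import Mathlib

section
/- For every integer N ≥ 1 and λ > 0, the ground state energy satisfies the two-sided bound 0 ≤ (λ/2) N (N−1) ŵ(0) − E(λ,N) ≤ (λ N / 2) ( w(0) − ŵ(0) ). In particular, if λ N ≤ C then |E(λ,N) − (λ/2) N (N−1) ŵ(0)| ≤ (C/2) ( w(0) − ŵ(0) ). -/
open MeasureTheory Real

noncomputable section

/-- The unit cube `[0,1]^{dN}` in the configuration space of `N` particles in `ℝ^d`. -/
def cube (d N : ℕ) : Set (Fin N → Fin d → ℝ) :=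
  Set.univ.pi fun _ => Set.univ.pi fun _ => Set.Icc (0 : ℝ) 1

/-- The unit cube `[0,1]^d` in `ℝ^d`. -/
def cube1 (d : ℕ) : Set (Fin d → ℝ) :=
  Set.univ.pi fun _ => Set.Icc (0 : ℝ) 1

/-- `Ψ` is admissible: smooth, `ℤ^d`-periodic in each particle variable, symmetric under
permutations of the particles, and `L²`-normalized on the unit cube. -/
def IsAdmissible (d N : ℕ) (Ψ : (Fin N → Fin d → ℝ) → ℂ) : Prop :=
  ContDiff ℝ (⊤ : ℕ∞) Ψ ∧
  (∀ (x : Fin N → Fin d → ℝ) (j : Fin N) (v : Fin d → ℤ),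
      Ψ (Function.update x j (x j + fun i => (v i : ℝ))) = Ψ x) ∧
  (∀ (σ : Equiv.Perm (Fin N)) (x : Fin N → Fin d → ℝ), Ψ (x ∘ σ) = Ψ x) ∧
  (∫ x in cube d N, ‖Ψ x‖ ^ 2) = 1

/-- The energy `ℰ_{λ,N}(Ψ)` of a wave function `Ψ`. -/
def energy (d N : ℕ) (lam : ℝ) (w : (Fin d → ℝ) → ℝ)
    (Ψ : (Fin N → Fin d → ℝ) → ℂ) : ℝ :=
  ∫ x in cube d N,
    ((∑ j : Fin N, ∑ i : Fin d, ‖fderiv ℝ Ψ x (Pi.single j (Pi.single i 1))‖ ^ 2) +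
      lam * (∑ j : Fin N, ∑ k : Fin N, if j < k then w (x j - x k) else 0) * ‖Ψ x‖ ^ 2)

/-- The ground state energy `E(λ,N)`. -/
def GSE (d N : ℕ) (lam : ℝ) (w : (Fin d → ℝ) → ℝ) : ℝ :=
  sInf {e | ∃ Ψ, IsAdmissible d N Ψ ∧ energy d N lam w Ψ = e}

/-- The interaction potential defined by the absolutely convergent Fourier series
`w(x) = ∑_{p ∈ (2πℤ)^d} ŵ(p) e^{ip·x}`, with the lattice point `p = 2πk` indexed by
`k ∈ ℤ^d`. -/
def wOf (d : ℕ) (hw : (Fin d → ℤ) → ℝ) (x : Fin d → ℝ) : ℝ :=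
  (∑' k : Fin d → ℤ,
    (hw k : ℂ) * Complex.exp (Complex.I * ((∑ i, (2 * π * (k i : ℝ)) * x i : ℝ) : ℂ))).re

/-- `|p|²` for the lattice point `p = 2πk`. -/
def pSq (d : ℕ) (k : Fin d → ℤ) : ℝ := ∑ i, (2 * π * (k i : ℝ)) ^ 2

/-- The elementary excitation energy `e_p = √(|p|⁴ + 2|p|²ŵ(p))`. -/
def ePk (d : ℕ) (hw : (Fin d → ℤ) → ℝ) (k : Fin d → ℤ) : ℝ :=
  Real.sqrt (pSq d k ^ 2 + 2 * pSq d k * hw k)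

/-- The Bogoliubov coefficient `α_p = ŵ(p)/(|p|² + ŵ(p) + e_p)`. -/
def alphaP (d : ℕ) (hw : (Fin d → ℤ) → ℝ) (k : Fin d → ℤ) : ℝ :=
  hw k / (pSq d k + hw k + ePk d hw k)

/-- The Bogoliubov ground state energy
`e_B = -(1/2) ∑_{p ≠ 0} (|p|² + ŵ(p) - e_p)`. -/
def eB (d : ℕ) (hw : (Fin d → ℤ) → ℝ) : ℝ :=
  -(1 / 2) * ∑' k : {k : Fin d → ℤ // k ≠ 0}, (pSq d k.1 + hw k.1 - ePk d hw k.1)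

/-- The projection `Q_j` removing the condensate in the `j`-th variable. -/
def Qop (d N : ℕ) (j : Fin N) (Ψ : (Fin N → Fin d → ℝ) → ℂ) :
    (Fin N → Fin d → ℝ) → ℂ :=
  fun x => Ψ x - ∫ y in cube1 d, Ψ (Function.update x j y)

/-- The expected number of excited particles `⟨𝒩₊⟩_Ψ`. -/
def NplusExp (d N : ℕ) (Ψ : (Fin N → Fin d → ℝ) → ℂ) : ℝ :=
  ∑ j : Fin N, ∫ x in cube d N, ‖Qop d N j Ψ x‖ ^ 2

/-- The second moment `⟨𝒩₊²⟩_Ψ` of the number of excited particles. -/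
def NplusSqExp (d N : ℕ) (Ψ : (Fin N → Fin d → ℝ) → ℂ) : ℝ :=
  ∑ j : Fin N, ∑ k : Fin N, ∫ x in cube d N, ‖Qop d N j (Qop d N k Ψ) x‖ ^ 2

namespace GSEAux

def phase (d : ℕ) (k : Fin d → ℤ) (y : Fin d → ℝ) : ℂ :=
  Complex.exp (Complex.I * ((∑ i, (2 * π * (k i : ℝ)) * y i : ℝ) : ℂ))

lemma wOf_eq (d : ℕ) (hw : (Fin d → ℤ) → ℝ) (x : Fin d → ℝ) :
    wOf d hw x = (∑' k, (hw k : ℂ) * phase d k x).re := rfl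

lemma norm_phase (d : ℕ) (k : Fin d → ℤ) (y : Fin d → ℝ) : ‖phase d k y‖ = 1 := by
  rw [phase, Complex.norm_exp]
  simp

lemma phase_zero_right (d : ℕ) (k : Fin d → ℤ) : phase d k 0 = 1 := by
  simp [phase]

lemma phase_zero_left (d : ℕ) (y : Fin d → ℝ) : phase d 0 y = 1 := by
  simp [phase]

lemma phase_add (d : ℕ) (k : Fin d → ℤ) (y z : Fin d → ℝ) :
    phase d k (y + z) = phase d k y * phase d k z := by
  rw [phase, phase, phase, ← Complex.exp_add]
  congr 1
  push_cast
  rw [Finset.mul_sum, Finset.mul_sum, Finset.mul_sum, ← Finset.sum_add_distrib]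
  refine Finset.sum_congr rfl fun i _ => ?_
  push_cast [Pi.add_apply]
  ring

lemma phase_neg_arg (d : ℕ) (k : Fin d → ℤ) (y : Fin d → ℝ) :
    phase d k (-y) = phase d (-k) y := by
  rw [phase, phase]
  congr 2
  push_cast
  refine Finset.sum_congr rfl fun i _ => ?_
  push_cast [Pi.neg_apply]
  ring

lemma phase_sub (d : ℕ) (k : Fin d → ℤ) (y z : Fin d → ℝ) :
    phase d k (y - z) = phase d k y * phase d (-k) z := by
  rw [sub_eq_add_neg, phase_add, phase_neg_arg]

lemma phase_conj (d : ℕ) (k : Fin d → ℤ) (y : Fin d → ℝ) :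
    phase d (-k) y = starRingEnd ℂ (phase d k y) := by
  rw [phase, phase, ← Complex.exp_conj]
  congr 1
  rw [map_mul, Complex.conj_I, Complex.conj_ofReal]
  push_cast
  rw [Finset.mul_sum, neg_mul, Finset.mul_sum, ← Finset.sum_neg_distrib]
  refine Finset.sum_congr rfl fun i _ => ?_
  push_cast [Pi.neg_apply]
  ring


variable {d : ℕ} {hw : (Fin d → ℤ) → ℝ}

lemma summable_term (hs : Summable hw) (f : (Fin d → ℤ) → Fin d → ℝ) :
    Summable fun k => (hw k : ℂ) * phase d k (f k) := by
  refine Summable.of_norm ?_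
  have : ∀ k, ‖(hw k : ℂ) * phase d k (f k)‖ = |hw k| := by
    intro k; rw [norm_mul, norm_phase, mul_one, Complex.norm_real, Real.norm_eq_abs]
  simpa [this, norm_phase] using hs.abs

lemma wOf_even (he : ∀ k, hw (-k) = hw k) (hs : Summable hw) (y : Fin d → ℝ) :
    wOf d hw (-y) = wOf d hw y := by
  rw [wOf_eq, wOf_eq]
  congr 1
  have h1 : ∀ k : Fin d → ℤ, (hw k : ℂ) * phase d k (-y) = (hw k : ℂ) * phase d (-k) y := by
    intro k; rw [phase_neg_arg]
  rw [tsum_congr h1]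
  rw [← (Equiv.neg (Fin d → ℤ)).tsum_eq (fun k => (hw k : ℂ) * phase d (-k) y)]
  simp [he]

lemma wOf_zero (hs : Summable hw) : wOf d hw 0 = ∑' k, hw k := by
  rw [wOf_eq]
  have : ∀ k : Fin d → ℤ, (hw k : ℂ) * phase d k 0 = (hw k : ℂ) := by
    intro k; rw [phase_zero_right, mul_one]
  rw [tsum_congr this, ← Complex.ofReal_tsum]
  simp

lemma hw_le_wOf_zero (hnn : ∀ k, 0 ≤ hw k) (hs : Summable hw) : hw 0 ≤ wOf d hw 0 := by
  rw [wOf_zero hs]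
  exact Summable.le_tsum hs 0 fun k _ => hnn k

lemma continuous_phase (k : Fin d → ℤ) : Continuous (phase d k) := by
  unfold phase
  fun_prop

lemma continuous_ctsum (hnn : ∀ k, 0 ≤ hw k) (hs : Summable hw) :
    Continuous fun x => ∑' k, (hw k : ℂ) * phase d k x := by
  refine continuous_tsum (fun k => continuous_const.mul (continuous_phase k)) hs ?_
  intro k x
  rw [norm_mul, norm_phase, mul_one, Complex.norm_real, Real.norm_eq_abs, abs_of_nonneg (hnn k)]

lemma continuous_wOf (hnn : ∀ k, 0 ≤ hw k) (hs : Summable hw) : Continuous (wOf d hw) :=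
  Complex.continuous_re.comp (continuous_ctsum hnn hs)


lemma measurableSet_cube1 : MeasurableSet (cube1 d) :=
  MeasurableSet.univ_pi fun _ => measurableSet_Icc

lemma measurableSet_cube {N : ℕ} : MeasurableSet (cube d N) :=
  MeasurableSet.univ_pi fun _ => measurableSet_cube1

lemma isCompact_cube1 : IsCompact (cube1 d) :=
  isCompact_univ_pi fun _ => isCompact_Icc

lemma isCompact_cube {N : ℕ} : IsCompact (cube d N) :=
  isCompact_univ_pi fun _ => isCompact_cube1

lemma volume_cube1 : volume (cube1 d) = 1 := by
  rw [cube1, volume_pi_pi]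
  simp

lemma volume_cube {N : ℕ} : volume (cube d N) = 1 := by
  rw [show cube d N = Set.univ.pi fun _ : Fin N => cube1 d from rfl, volume_pi_pi]
  simp [volume_cube1]

/-- Restriction of a product measure to a product set. -/
lemma restrict_pi_pi {ι : Type*} [Fintype ι] {α : Type*} [MeasureSpace α]
    [SigmaFinite (volume : Measure α)] {s : Set α} (hs : MeasurableSet s) :
    (volume : Measure (ι → α)).restrict (Set.univ.pi fun _ => s) =
      Measure.pi fun _ : ι => volume.restrict s := by
  refine (Measure.pi_eq fun t ht => ?_).symm
  rw [Measure.restrict_apply (MeasurableSet.univ_pi ht), ← Set.pi_inter_distrib,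
    volume_pi_pi]
  exact Finset.prod_congr rfl fun i _ => (Measure.restrict_apply (ht i)).symm

/-- Fubini for a product of one-variable functions over a product measure. -/
lemma integral_pi_prod {ι : Type*} [Fintype ι] {α : Type*} [mα : MeasurableSpace α]
    (μ : Measure α) [SigmaFinite μ] (f : ι → α → ℂ) :
    ∫ x : ι → α, ∏ i, f i (x i) ∂(Measure.pi fun _ : ι => μ) = ∏ i, ∫ x, f i x ∂μ := by
  letI : MeasureSpace α := ⟨μ⟩
  exact MeasureTheory.integral_fintype_prod_eq_prod f

lemma setIntegral_cube_prod {ι : Type*} [Fintype ι] {α : Type*} [MeasureSpace α]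
    [SigmaFinite (volume : Measure α)] {s : Set α} (hs : MeasurableSet s) (f : ι → α → ℂ) :
    ∫ x : ι → α in Set.univ.pi fun _ => s, ∏ i, f i (x i) = ∏ i, ∫ x in s, f i x := by
  have := integral_pi_prod (μ := (volume : Measure α).restrict s) f
  rwa [← restrict_pi_pi (ι := ι) hs] at this


lemma integral_Icc_exp_ne (n : ℤ) (hn : n ≠ 0) :
    ∫ t in Set.Icc (0:ℝ) 1, Complex.exp (Complex.I * ((2 * π * (n:ℝ) : ℝ) : ℂ) * (t:ℂ)) = 0 := by
  have hc : Complex.I * ((2 * π * (n:ℝ) : ℝ) : ℂ) ≠ 0 := by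
    refine mul_ne_zero Complex.I_ne_zero ?_
    simp only [ne_eq, Complex.ofReal_eq_zero]
    exact mul_ne_zero (mul_ne_zero two_ne_zero Real.pi_ne_zero) (Int.cast_ne_zero.mpr hn)
  rw [MeasureTheory.integral_Icc_eq_integral_Ioc,
    ← intervalIntegral.integral_of_le (zero_le_one)]
  rw [integral_exp_mul_complex hc]
  have h1 : Complex.I * ((2 * π * (n:ℝ) : ℝ) : ℂ) * (1:ℝ) = (n:ℂ) * (2 * π * Complex.I) := by
    push_cast; ring
  have h0 : Complex.I * ((2 * π * (n:ℝ) : ℝ) : ℂ) * (0:ℝ) = 0 := by push_cast; ring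
  rw [h1, h0, Complex.exp_int_mul_two_pi_mul_I, Complex.exp_zero, sub_self, zero_div]

lemma integral_cube1_phase (k : Fin d → ℤ) (hk : k ≠ 0) :
    ∫ y in cube1 d, phase d k y = 0 := by
  have hrw : ∀ y : Fin d → ℝ, phase d k y =
      ∏ i, Complex.exp (Complex.I * ((2 * π * (k i : ℝ) : ℝ) : ℂ) * ((y i : ℝ) : ℂ)) := by
    intro y
    rw [phase, ← Complex.exp_sum]
    congr 1
    push_cast
    rw [Finset.mul_sum]
    refine Finset.sum_congr rfl fun i _ => ?_
    ring
  rw [show (∫ y in cube1 d, phase d k y) = ∫ y in cube1 d,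
      ∏ i, Complex.exp (Complex.I * ((2 * π * (k i : ℝ) : ℝ) : ℂ) * ((y i : ℝ) : ℂ)) from
    integral_congr_ae (Filter.Eventually.of_forall fun y => hrw y)]
  rw [show cube1 d = Set.univ.pi fun _ : Fin d => Set.Icc (0:ℝ) 1 from rfl]
  rw [setIntegral_cube_prod measurableSet_Icc
    (fun i (t : ℝ) => Complex.exp (Complex.I * ((2 * π * (k i : ℝ) : ℝ) : ℂ) * (t : ℂ)))]
  obtain ⟨i, hi⟩ := Function.ne_iff.mp hk
  exact Finset.prod_eq_zero (Finset.mem_univ i) (integral_Icc_exp_ne (k i) hi)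

lemma integral_cube_phase_sub {N : ℕ} (j k : Fin N) (hjk : j ≠ k) (p : Fin d → ℤ)
    (hp : p ≠ 0) : ∫ x in cube d N, phase d p (x j - x k) = 0 := by
  classical
  set g : Fin N → (Fin d → ℝ) → ℂ :=
    fun m => if m = j then phase d p else if m = k then phase d (-p) else fun _ => 1 with hg
  have hx : ∀ x : Fin N → Fin d → ℝ, phase d p (x j - x k) = ∏ m, g m (x m) := by
    intro x
    rw [phase_sub]
    rw [← Finset.mul_prod_erase Finset.univ (fun m => g m (x m)) (Finset.mem_univ j)]
    have hk2 : k ∈ Finset.univ.erase j := Finset.mem_erase.mpr ⟨Ne.symm hjk, Finset.mem_univ k⟩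
    rw [← Finset.mul_prod_erase _ (fun m => g m (x m)) hk2]
    have h1 : g j (x j) = phase d p (x j) := by simp [hg]
    have h2 : g k (x k) = phase d (-p) (x k) := by simp [hg, Ne.symm hjk]
    have h3 : ∏ m ∈ (Finset.univ.erase j).erase k, g m (x m) = 1 := by
      refine Finset.prod_eq_one fun m hm => ?_
      have h4 := Finset.mem_erase.mp hm
      have h5 := (Finset.mem_erase.mp h4.2).1
      simp [hg, h4.1, h5]
    rw [h1, h2, h3, mul_one]
  rw [integral_congr_ae (Filter.Eventually.of_forall hx)]
  rw [show cube d N = Set.univ.pi fun _ : Fin N => cube1 d from rfl,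
    setIntegral_cube_prod measurableSet_cube1 g]
  refine Finset.prod_eq_zero (Finset.mem_univ j) ?_
  have : g j = phase d p := by simp [hg]
  rw [this]
  exact integral_cube1_phase p hp


lemma integral_cube_wOf (hnn : ∀ k, 0 ≤ hw k) (hs : Summable hw) {N : ℕ}
    (j k : Fin N) (hjk : j ≠ k) :
    ∫ x in cube d N, wOf d hw (x j - x k) = hw 0 := by
  classical
  have hfc : ∀ p : Fin d → ℤ,
      Continuous fun x : Fin N → Fin d → ℝ => (hw p : ℂ) * phase d p (x j - x k) := fun p =>
    continuous_const.mul ((continuous_phase p).comp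
      ((continuous_apply j).sub (continuous_apply k)))
  have hFc : Continuous fun x : Fin N → Fin d → ℝ =>
      ∑' p, (hw p : ℂ) * phase d p (x j - x k) :=
    (continuous_ctsum hnn hs).comp ((continuous_apply j).sub (continuous_apply k))
  have hFi : IntegrableOn (fun x : Fin N → Fin d → ℝ =>
      ∑' p, (hw p : ℂ) * phase d p (x j - x k)) (cube d N) :=
    hFc.locallyIntegrable.integrableOn_isCompact isCompact_cube
  have hμ : (volume.restrict (cube d N)) Set.univ = 1 := by
    rw [Measure.restrict_apply_univ, volume_cube]
  have hswap : ∫ x in cube d N, ∑' p, (hw p : ℂ) * phase d p (x j - x k)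
      = ∑' p, ∫ x in cube d N, (hw p : ℂ) * phase d p (x j - x k) := by
    refine integral_tsum (fun p => (hfc p).aestronglyMeasurable) ?_
    have hb : ∀ p : Fin d → ℤ,
        ∫⁻ x in cube d N, ‖(hw p : ℂ) * phase d p (x j - x k)‖₊ = ENNReal.ofReal (hw p) := by
      intro p
      have h1 : ∀ x : Fin N → Fin d → ℝ,
          ((‖(hw p : ℂ) * phase d p (x j - x k)‖₊ : ENNReal)) = ENNReal.ofReal (hw p) := by
        intro x
        rw [← enorm_eq_nnnorm, ← ofReal_norm, norm_mul, norm_phase, mul_one, Complex.norm_real,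
          Real.norm_eq_abs, abs_of_nonneg (hnn p)]
      rw [lintegral_congr h1, lintegral_const, hμ, mul_one]
    simp only [enorm_eq_nnnorm]
    rw [tsum_congr hb, ← ENNReal.ofReal_tsum_of_nonneg hnn hs]
    exact ENNReal.ofReal_ne_top
  have hval : ∀ p : Fin d → ℤ,
      (∫ x in cube d N, (hw p : ℂ) * phase d p (x j - x k))
        = if p = 0 then (hw 0 : ℂ) else 0 := by
    intro p
    by_cases hp : p = 0
    · subst hp
      have h2 : ∀ x : Fin N → Fin d → ℝ,
          (hw (0 : Fin d → ℤ) : ℂ) * phase d 0 (x j - x k) = (hw 0 : ℂ) := by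
        intro x; rw [phase_zero_left, mul_one]
      rw [integral_congr_ae (Filter.Eventually.of_forall h2), setIntegral_const, measureReal_def, volume_cube]
      simp
    · rw [if_neg hp, integral_const_mul, integral_cube_phase_sub j k hjk p hp, mul_zero]
  have htsum : ∑' p, ∫ x in cube d N, (hw p : ℂ) * phase d p (x j - x k) = (hw 0 : ℂ) := by
    rw [tsum_congr hval, tsum_eq_single 0 (fun p hp => by simp [hp])]
    simp
  have hre : ∫ x in cube d N, wOf d hw (x j - x k)
      = (∫ x in cube d N, ∑' p, (hw p : ℂ) * phase d p (x j - x k)).re := by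
    have h := integral_re hFi
    simp only [RCLike.re_to_complex] at h
    exact h
  rw [hre, hswap, htsum, Complex.ofReal_re]


lemma double_sum_split {N : ℕ} (f : Fin N → Fin N → ℝ) (hf : ∀ j k, f j k = f k j) :
    ∑ j, ∑ k, f j k
      = 2 * (∑ j, ∑ k, if j < k then f j k else 0) + ∑ j, f j j := by
  classical
  have key : ∀ j k : Fin N, f j k
      = (if j < k then f j k else 0) + (if k < j then f j k else 0)
        + (if j = k then f j k else 0) := by
    intro j k
    rcases lt_trichotomy j k with h | h | h
    · simp [h, asymm h, h.ne]
    · subst h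
      simp [lt_irrefl]
    · simp [h, asymm h, ne_of_gt h]
  have h1 : ∑ j, ∑ k, f j k
      = (∑ j, ∑ k, if j < k then f j k else 0)
        + (∑ j, ∑ k, (if k < j then f j k else 0))
        + (∑ j, ∑ k, (if j = k then f j k else 0)) := by
    rw [← Finset.sum_add_distrib, ← Finset.sum_add_distrib]
    refine Finset.sum_congr rfl fun j _ => ?_
    rw [← Finset.sum_add_distrib, ← Finset.sum_add_distrib]
    exact Finset.sum_congr rfl fun k _ => key j k
  have h2 : (∑ j, ∑ k, (if k < j then f j k else 0))
      = ∑ j, ∑ k, if j < k then f j k else 0 := by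
    rw [Finset.sum_comm]
    refine Finset.sum_congr rfl fun j _ => Finset.sum_congr rfl fun k _ => ?_
    by_cases h : j < k
    · rw [if_pos h, if_pos h, hf]
    · rw [if_neg h, if_neg h]
  have h3 : (∑ j, ∑ k, (if j = k then f j k else 0)) = ∑ j, f j j := by
    refine Finset.sum_congr rfl fun j _ => ?_
    simp [Finset.sum_ite_eq]
  rw [h1, h2, h3]
  ring

lemma pair_count {N : ℕ} :
    (∑ j : Fin N, ∑ k : Fin N, if j < k then (1:ℝ) else 0) = ((N:ℝ)^2 - N)/2 := by
  have h := double_sum_split (fun _ _ : Fin N => (1:ℝ)) (fun _ _ => rfl)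
  simp only [Finset.sum_const, Finset.card_univ, Fintype.card_fin, nsmul_eq_mul, mul_one] at h
  have : ((N:ℝ)) * N = 2 * (∑ j : Fin N, ∑ k : Fin N, if j < k then (1:ℝ) else 0) + N := h
  nlinarith [this]

lemma interaction_lower (hnn : ∀ k, 0 ≤ hw k) (he : ∀ k, hw (-k) = hw k)
    (hs : Summable hw) {N : ℕ} (x : Fin N → Fin d → ℝ) :
    ((N:ℝ)^2 * hw 0 - (N:ℝ) * wOf d hw 0)/2
      ≤ ∑ j, ∑ k, if j < k then wOf d hw (x j - x k) else 0 := by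
  classical
  set r : (Fin d → ℤ) → ℝ := fun p => hw p * ‖∑ j, phase d p (x j)‖^2 with hr
  have hrnn : ∀ p, 0 ≤ r p := fun p => mul_nonneg (hnn p) (sq_nonneg _)
  have hrle : ∀ p, r p ≤ hw p * (N:ℝ)^2 := by
    intro p
    have h1 : ‖∑ j, phase d p (x j)‖ ≤ (N:ℝ) := by
      refine le_trans (norm_sum_le _ _) ?_
      rw [Finset.sum_congr rfl fun j _ => norm_phase d p (x j)]
      simp
    exact mul_le_mul_of_nonneg_left (pow_le_pow_left₀ (norm_nonneg _) h1 2) (hnn p)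
  have hrs : Summable r :=
    Summable.of_nonneg_of_le hrnn hrle (hs.mul_right ((N:ℝ)^2))
  have hsumm : ∀ (j k : Fin N), Summable fun p => (hw p : ℂ) * phase d p (x j - x k) :=
    fun j k => summable_term hs _
  have hterm : ∀ p : Fin d → ℤ,
      (∑ j, ∑ k, (hw p : ℂ) * phase d p (x j - x k)) = ((r p : ℝ) : ℂ) := by
    intro p
    have h1 : ∀ j k : Fin N, (hw p : ℂ) * phase d p (x j - x k)
        = (hw p : ℂ) * (phase d p (x j) * (starRingEnd ℂ) (phase d p (x k))) := by
      intro j k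
      rw [phase_sub, phase_conj]
    calc (∑ j, ∑ k, (hw p : ℂ) * phase d p (x j - x k))
        = ∑ j, ∑ k, (hw p : ℂ) * (phase d p (x j) * (starRingEnd ℂ) (phase d p (x k))) :=
          Finset.sum_congr rfl fun j _ => Finset.sum_congr rfl fun k _ => h1 j k
      _ = (hw p : ℂ) * ((∑ j, phase d p (x j)) * (starRingEnd ℂ) (∑ k, phase d p (x k))) := by
          rw [map_sum, Finset.sum_mul_sum, Finset.mul_sum]
          exact Finset.sum_congr rfl fun j _ => (Finset.mul_sum _ _ _).symm
      _ = ((r p : ℝ) : ℂ) := by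
          rw [Complex.mul_conj]
          rw [show Complex.normSq (∑ j, phase d p (x j)) = ‖∑ j, phase d p (x j)‖^2 from by
            rw [Complex.normSq_eq_norm_sq]]
          rw [hr]
          norm_cast
  have hT : (∑ j, ∑ k, wOf d hw (x j - x k)) = ∑' p, r p := by
    have h1 : (∑ j, ∑ k, wOf d hw (x j - x k))
        = (∑ j, ∑ k, ∑' p, (hw p : ℂ) * phase d p (x j - x k)).re := by
      rw [Complex.re_sum]
      refine Finset.sum_congr rfl fun j _ => ?_
      rw [Complex.re_sum]
      rfl
    have h2 : (∑ j : Fin N, ∑ k : Fin N, ∑' p, (hw p : ℂ) * phase d p (x j - x k))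
        = ∑' p, ∑ j, ∑ k, (hw p : ℂ) * phase d p (x j - x k) := by
      have hA : ∀ j : Fin N, (∑ k, ∑' p, (hw p : ℂ) * phase d p (x j - x k))
          = ∑' p, ∑ k, (hw p : ℂ) * phase d p (x j - x k) :=
        fun j => (Summable.tsum_finsetSum fun k _ => hsumm j k).symm
      calc (∑ j : Fin N, ∑ k : Fin N, ∑' p, (hw p : ℂ) * phase d p (x j - x k))
          = ∑ j : Fin N, ∑' p, ∑ k, (hw p : ℂ) * phase d p (x j - x k) :=
            Finset.sum_congr rfl fun j _ => hA j
        _ = ∑' p, ∑ j, ∑ k, (hw p : ℂ) * phase d p (x j - x k) :=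
            (Summable.tsum_finsetSum fun j _ => summable_sum fun k _ => hsumm j k).symm
    rw [h1, h2, tsum_congr hterm, ← Complex.ofReal_tsum, Complex.ofReal_re]
  have hT0 : hw 0 * (N:ℝ)^2 ≤ ∑ j, ∑ k, wOf d hw (x j - x k) := by
    rw [hT]
    have : r 0 = hw 0 * (N:ℝ)^2 := by
      rw [hr]
      simp only [phase_zero_left]
      rw [Finset.sum_const, Finset.card_univ, Fintype.card_fin]
      simp
    rw [← this]
    exact Summable.le_tsum hrs 0 fun p _ => hrnn p
  have hsym : ∀ j k : Fin N, wOf d hw (x j - x k) = wOf d hw (x k - x j) := by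
    intro j k
    have h5 : x j - x k = -(x k - x j) := by abel
    rw [h5, wOf_even he hs]
  have hsplit := double_sum_split (fun j k => wOf d hw (x j - x k)) hsym
  have hdiag : (∑ j : Fin N, wOf d hw (x j - x j)) = (N:ℝ) * wOf d hw 0 := by
    have h7 : ∀ j : Fin N, wOf d hw (x j - x j) = wOf d hw 0 := by
      intro j; rw [sub_self]
    rw [Finset.sum_congr rfl fun j _ => h7 j, Finset.sum_const, Finset.card_univ,
      Fintype.card_fin]
    simp
  rw [hdiag] at hsplit
  have h6 := hT0
  rw [hsplit] at h6
  linarith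

lemma const_admissible {N : ℕ} : IsAdmissible d N (fun _ => (1 : ℂ)) := by
  refine ⟨contDiff_const, fun _ _ _ => rfl, fun _ _ => rfl, ?_⟩
  have h1 : ∀ x : Fin N → Fin d → ℝ, ‖(1:ℂ)‖^2 = (1:ℝ) := by simp
  rw [show (fun x : Fin N → Fin d → ℝ => ‖(1:ℂ)‖^2) = fun _ => (1:ℝ) from funext h1]
  rw [setIntegral_const, measureReal_def, volume_cube]
  simp

lemma energy_const (hnn : ∀ k, 0 ≤ hw k) (hs : Summable hw) {N : ℕ} (lam : ℝ) :
    energy d N lam (wOf d hw) (fun _ => (1 : ℂ))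
      = lam * (((N:ℝ)^2 - N)/2) * hw 0 := by
  unfold energy
  have h0 : ∀ x : Fin N → Fin d → ℝ,
      ((∑ j : Fin N, ∑ i : Fin d,
        ‖fderiv ℝ (fun _ : Fin N → Fin d → ℝ => (1:ℂ)) x (Pi.single j (Pi.single i 1))‖ ^ 2) +
        lam * (∑ j : Fin N, ∑ k : Fin N, if j < k then wOf d hw (x j - x k) else 0) * ‖(1:ℂ)‖ ^ 2)
      = lam * (∑ j : Fin N, ∑ k : Fin N, if j < k then wOf d hw (x j - x k) else 0) := by
    intro x
    simp [fderiv_const]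
  rw [integral_congr_ae (Filter.Eventually.of_forall h0)]
  have hint : ∀ j k : Fin N, IntegrableOn
      (fun x : Fin N → Fin d → ℝ => if j < k then wOf d hw (x j - x k) else 0) (cube d N) := by
    intro j k
    by_cases h : j < k
    · simp only [if_pos h]
      exact (((continuous_wOf hnn hs).comp
        ((continuous_apply j).sub (continuous_apply k))).locallyIntegrable).integrableOn_isCompact
        isCompact_cube
    · simp only [if_neg h]
      exact integrableOn_zero
  have hsum : ∫ x in cube d N,
      (∑ j : Fin N, ∑ k : Fin N, if j < k then wOf d hw (x j - x k) else 0)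
      = ∑ j : Fin N, ∑ k : Fin N, ∫ x in cube d N,
          (if j < k then wOf d hw (x j - x k) else 0) := by
    rw [integral_finset_sum _ fun j _ => integrable_finset_sum _ fun k _ => hint j k]
    exact Finset.sum_congr rfl fun j _ => integral_finset_sum _ fun k _ => hint j k
  have hval : ∀ j k : Fin N,
      (∫ x in cube d N, (if j < k then wOf d hw (x j - x k) else 0))
        = if j < k then hw 0 else 0 := by
    intro j k
    by_cases h : j < k
    · simp only [if_pos h]
      exact integral_cube_wOf hnn hs j k (ne_of_lt h)
    · simp only [if_neg h, integral_zero]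
  have hcount : (∑ j : Fin N, ∑ k : Fin N, if j < k then hw 0 else 0)
      = ((N:ℝ)^2 - N)/2 * hw 0 := by
    have h1 : ∀ j k : Fin N, (if j < k then hw 0 else 0) = (if j < k then (1:ℝ) else 0) * hw 0 := by
      intro j k; by_cases h : j < k <;> simp [h]
    calc (∑ j : Fin N, ∑ k : Fin N, if j < k then hw 0 else 0)
        = ∑ j : Fin N, ∑ k : Fin N, (if j < k then (1:ℝ) else 0) * hw 0 :=
          Finset.sum_congr rfl fun j _ => Finset.sum_congr rfl fun k _ => h1 j k
      _ = (∑ j : Fin N, ∑ k : Fin N, if j < k then (1:ℝ) else 0) * hw 0 := by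
          rw [Finset.sum_mul]
          exact Finset.sum_congr rfl fun j _ => (Finset.sum_mul _ _ _).symm
      _ = ((N:ℝ)^2 - N)/2 * hw 0 := by rw [pair_count]
  rw [integral_const_mul, hsum, Finset.sum_congr rfl fun j _ =>
    Finset.sum_congr rfl fun k _ => hval j k, hcount]
  ring

set_option maxHeartbeats 1000000 in
lemma energy_lower (hnn : ∀ k, 0 ≤ hw k) (he : ∀ k, hw (-k) = hw k) (hs : Summable hw)
    {N : ℕ} {lam : ℝ} (hlam : 0 < lam) (Ψ : (Fin N → Fin d → ℝ) → ℂ)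
    (hΨ : IsAdmissible d N Ψ) :
    lam * (((N:ℝ)^2 * hw 0 - (N:ℝ) * wOf d hw 0)/2) ≤ energy d N lam (wOf d hw) Ψ := by
  obtain ⟨hsm, -, -, hnorm⟩ := hΨ
  have hΨc : Continuous Ψ := hsm.continuous
  set g : (Fin N → Fin d → ℝ) → ℝ := fun x =>
    ∑ j : Fin N, ∑ i : Fin d, ‖fderiv ℝ Ψ x (Pi.single j (Pi.single i 1))‖ ^ 2 with hg
  set S : (Fin N → Fin d → ℝ) → ℝ := fun x =>
    ∑ j : Fin N, ∑ k : Fin N, if j < k then wOf d hw (x j - x k) else 0 with hS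
  have hgc : Continuous g := by
    have hf : Continuous (fderiv ℝ Ψ) := hsm.continuous_fderiv (by simp)
    refine continuous_finset_sum _ fun j _ => continuous_finset_sum _ fun i _ => ?_
    exact ((hf.clm_apply continuous_const).norm).pow 2
  have hSc : Continuous S := by
    refine continuous_finset_sum _ fun j _ => continuous_finset_sum _ fun k _ => ?_
    by_cases h : j < k
    · simp only [if_pos h]
      exact (continuous_wOf hnn hs).comp ((continuous_apply j).sub (continuous_apply k))
    · simp only [if_neg h]
      exact continuous_const
  have hgi : IntegrableOn g (cube d N) :=
    hgc.locallyIntegrable.integrableOn_isCompact isCompact_cube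
  have hhc : Continuous fun x => lam * S x * ‖Ψ x‖ ^ 2 :=
    (continuous_const.mul hSc).mul (hΨc.norm.pow 2)
  have hhi : IntegrableOn (fun x => lam * S x * ‖Ψ x‖ ^ 2) (cube d N) :=
    hhc.locallyIntegrable.integrableOn_isCompact isCompact_cube
  have hli : IntegrableOn
      (fun x => lam * (((N:ℝ)^2 * hw 0 - (N:ℝ) * wOf d hw 0)/2) * ‖Ψ x‖ ^ 2) (cube d N) :=
    ((continuous_const.mul (hΨc.norm.pow 2)).locallyIntegrable).integrableOn_isCompact
      isCompact_cube
  have hsplit : energy d N lam (wOf d hw) Ψ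
      = (∫ x in cube d N, g x) + ∫ x in cube d N, lam * S x * ‖Ψ x‖ ^ 2 := by
    unfold energy
    exact integral_add hgi hhi
  have hg0 : 0 ≤ ∫ x in cube d N, g x := by
    refine integral_nonneg fun x => ?_
    exact Finset.sum_nonneg fun j _ => Finset.sum_nonneg fun i _ => sq_nonneg _
  have hmono : ∫ x in cube d N, lam * (((N:ℝ)^2 * hw 0 - (N:ℝ) * wOf d hw 0)/2) * ‖Ψ x‖ ^ 2
      ≤ ∫ x in cube d N, lam * S x * ‖Ψ x‖ ^ 2 := by
    refine setIntegral_mono_on hli hhi measurableSet_cube fun x _ => ?_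
    refine mul_le_mul_of_nonneg_right ?_ (sq_nonneg _)
    exact mul_le_mul_of_nonneg_left (interaction_lower hnn he hs x) hlam.le
  have hlow : ∫ x in cube d N, lam * (((N:ℝ)^2 * hw 0 - (N:ℝ) * wOf d hw 0)/2) * ‖Ψ x‖ ^ 2
      = lam * (((N:ℝ)^2 * hw 0 - (N:ℝ) * wOf d hw 0)/2) := by
    rw [integral_const_mul, hnorm, mul_one]
  rw [hsplit]
  rw [← hlow] at *
  linarith

end GSEAux

/-- **Two-sided leading-order bound on the ground state energy.**
`0 ≤ (λ/2) N (N-1) ŵ(0) - E(λ,N) ≤ (λN/2)(w(0) - ŵ(0))`; in particular if `λN ≤ C` then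
`|E(λ,N) - (λ/2) N (N-1) ŵ(0)| ≤ (C/2)(w(0) - ŵ(0))`. -/
theorem ground_state_energy_two_sided (d : ℕ) (hd : 1 ≤ d)
    (hw : (Fin d → ℤ) → ℝ) (hw_nonneg : ∀ k, 0 ≤ hw k)
    (hw_even : ∀ k, hw (-k) = hw k) (hw_summable : Summable hw)
    (N : ℕ) (hN : 1 ≤ N) (lam : ℝ) (hlam : 0 < lam) :
    (0 ≤ lam / 2 * (N : ℝ) * ((N : ℝ) - 1) * hw 0 - GSE d N lam (wOf d hw) ∧
      lam / 2 * (N : ℝ) * ((N : ℝ) - 1) * hw 0 - GSE d N lam (wOf d hw) ≤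
        lam * (N : ℝ) / 2 * (wOf d hw 0 - hw 0)) ∧
    ∀ C : ℝ, lam * (N : ℝ) ≤ C →
      |GSE d N lam (wOf d hw) - lam / 2 * (N : ℝ) * ((N : ℝ) - 1) * hw 0| ≤
        C / 2 * (wOf d hw 0 - hw 0) := by
  classical
  have hD : 0 ≤ wOf d hw 0 - hw 0 :=
    sub_nonneg.mpr (GSEAux.hw_le_wOf_zero hw_nonneg hw_summable)
  have hmem : lam * (((N:ℝ)^2 - N)/2) * hw 0
      ∈ {e | ∃ Ψ, IsAdmissible d N Ψ ∧ energy d N lam (wOf d hw) Ψ = e} :=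
    ⟨fun _ => 1, GSEAux.const_admissible, GSEAux.energy_const hw_nonneg hw_summable lam⟩
  have hlb : ∀ e ∈ {e | ∃ Ψ, IsAdmissible d N Ψ ∧ energy d N lam (wOf d hw) Ψ = e},
      lam * (((N:ℝ)^2 * hw 0 - (N:ℝ) * wOf d hw 0)/2) ≤ e := by
    rintro e ⟨Ψ, hΨ, rfl⟩
    exact GSEAux.energy_lower hw_nonneg hw_even hw_summable hlam Ψ hΨ
  have hA : GSE d N lam (wOf d hw) ≤ lam * (((N:ℝ)^2 - N)/2) * hw 0 :=
    csInf_le ⟨_, hlb⟩ hmem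
  have hB : lam * (((N:ℝ)^2 * hw 0 - (N:ℝ) * wOf d hw 0)/2) ≤ GSE d N lam (wOf d hw) :=
    le_csInf ⟨_, hmem⟩ hlb
  have e1 : lam * (((N:ℝ)^2 - N)/2) * hw 0 = lam/2*(N:ℝ)*((N:ℝ)-1)*hw 0 := by ring
  have e2 : lam * (((N:ℝ)^2 * hw 0 - (N:ℝ)*wOf d hw 0)/2)
      = lam/2*(N:ℝ)*((N:ℝ)-1)*hw 0 - lam*(N:ℝ)/2*(wOf d hw 0 - hw 0) := by ring
  refine ⟨⟨by linarith, by linarith⟩, fun C hC => ?_⟩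
  have h3 : lam*(N:ℝ)/2*(wOf d hw 0 - hw 0) ≤ C/2*(wOf d hw 0 - hw 0) := by
    apply mul_le_mul_of_nonneg_right _ hD
    linarith
  rw [abs_sub_comm, abs_of_nonneg (by linarith)]
  linarith
end
end

section
/- For all real numbers x > 0 and y ≥ 0 one has 0 ≤ x + y − √(x² + 2xy) ≤ y²/(2x). Consequently, for every square-summable family of nonnegative reals ŵ(p), p ∈ (2πℤ)^d \ {0}, the family p ↦ |p|² + ŵ(p) − √(|p|⁴ + 2|p|² ŵ(p)) is nonnegative and summable, and the Bogoliubov energy e_B = −(1/2) ∑_{p ≠ 0} ( |p|² + ŵ(p) − √(|p|⁴ + 2|p|² ŵ(p)) ) satisfies −(1/(4(2π)²)) ∑_{p ≠ 0} ŵ(p)² ≤ e_B ≤ 0. -/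
open MeasureTheory Real

noncomputable section

lemma elem_bound (x y : ℝ) (hx : 0 < x) (hy : 0 ≤ y) :
    0 ≤ x + y - Real.sqrt (x ^ 2 + 2 * x * y) ∧
      x + y - Real.sqrt (x ^ 2 + 2 * x * y) ≤ y ^ 2 / (2 * x) := by
  set s := Real.sqrt (x ^ 2 + 2 * x * y) with hs
  have harg : (0:ℝ) ≤ x ^ 2 + 2 * x * y := by positivity
  have hsx : x ≤ s := by
    calc x = Real.sqrt (x ^ 2) := (Real.sqrt_sq hx.le).symm
    _ ≤ s := Real.sqrt_le_sqrt (by nlinarith)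
  have hsle : s ≤ x + y := by
    have : x ^ 2 + 2 * x * y ≤ (x + y) ^ 2 := by nlinarith
    calc s ≤ Real.sqrt ((x + y) ^ 2) := Real.sqrt_le_sqrt this
    _ = x + y := Real.sqrt_sq (by linarith)
  refine ⟨by linarith, ?_⟩
  have hssq : s ^ 2 = x ^ 2 + 2 * x * y := Real.sq_sqrt harg
  have hden : 0 < x + y + s := by linarith
  have key : x + y - s = y ^ 2 / (x + y + s) := by
    field_simp
    nlinarith
  rw [key]
  apply div_le_div_of_nonneg_left (by positivity) (by positivity)
  linarith

lemma pSq_ge (d : ℕ) (k : {k : Fin d → ℤ // k ≠ 0}) : (2 * π) ^ 2 ≤ pSq d k.1 := by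
  obtain ⟨k, hk⟩ := k
  have : ∃ i, k i ≠ 0 := by
    by_contra h
    push_neg at h
    exact hk (funext h)
  obtain ⟨i, hi⟩ := this
  have h1 : (1:ℝ) ≤ (k i : ℝ) ^ 2 := by
    have : (1:ℤ) ≤ (k i) ^ 2 := by
      rcases lt_or_gt_of_ne hi with h | h <;> nlinarith
    exact_mod_cast this
  have hterm : (2 * π) ^ 2 ≤ (2 * π * (k i : ℝ)) ^ 2 := by nlinarith [Real.pi_pos]
  calc (2 * π) ^ 2 ≤ (2 * π * (k i : ℝ)) ^ 2 := hterm
  _ ≤ pSq d k := Finset.single_le_sum (f := fun j => (2 * π * (k j : ℝ)) ^ 2)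
      (fun j _ => by positivity) (Finset.mem_univ i)

/-- **Summability of the Bogoliubov energy.** For `x > 0`, `y ≥ 0` one has
`0 ≤ x + y - √(x² + 2xy) ≤ y²/(2x)`; consequently for a square-summable nonnegative
family `ŵ` on the nonzero lattice, the family `p ↦ |p|² + ŵ(p) - √(|p|⁴ + 2|p|²ŵ(p))`
is nonnegative and summable, and
`-(1/(4(2π)²)) ∑ ŵ(p)² ≤ e_B ≤ 0`. -/
theorem bogoliubov_energy_summable (d : ℕ) (hd : 1 ≤ d)
    (hw : {k : Fin d → ℤ // k ≠ 0} → ℝ) (hw_nonneg : ∀ k, 0 ≤ hw k)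
    (hw_sq : Summable fun k => hw k ^ 2) :
    (∀ x y : ℝ, 0 < x → 0 ≤ y →
      0 ≤ x + y - Real.sqrt (x ^ 2 + 2 * x * y) ∧
        x + y - Real.sqrt (x ^ 2 + 2 * x * y) ≤ y ^ 2 / (2 * x)) ∧
    (∀ k, 0 ≤ pSq d k.1 + hw k - Real.sqrt (pSq d k.1 ^ 2 + 2 * pSq d k.1 * hw k)) ∧
    Summable (fun k : {k : Fin d → ℤ // k ≠ 0} =>
      pSq d k.1 + hw k - Real.sqrt (pSq d k.1 ^ 2 + 2 * pSq d k.1 * hw k)) ∧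
    (-(1 / (4 * (2 * π) ^ 2)) * ∑' k, hw k ^ 2 ≤
        -(1 / 2) * ∑' k : {k : Fin d → ℤ // k ≠ 0},
          (pSq d k.1 + hw k - Real.sqrt (pSq d k.1 ^ 2 + 2 * pSq d k.1 * hw k)) ∧
      -(1 / 2) * ∑' k : {k : Fin d → ℤ // k ≠ 0},
          (pSq d k.1 + hw k - Real.sqrt (pSq d k.1 ^ 2 + 2 * pSq d k.1 * hw k)) ≤ 0) := by
  have hpi := Real.pi_pos
  have hpos : ∀ k : {k : Fin d → ℤ // k ≠ 0}, 0 < pSq d k.1 := fun k =>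
    lt_of_lt_of_le (by positivity) (pSq_ge d k)
  have hmain : ∀ k : {k : Fin d → ℤ // k ≠ 0},
      0 ≤ pSq d k.1 + hw k - Real.sqrt (pSq d k.1 ^ 2 + 2 * pSq d k.1 * hw k) ∧
      pSq d k.1 + hw k - Real.sqrt (pSq d k.1 ^ 2 + 2 * pSq d k.1 * hw k)
        ≤ hw k ^ 2 / (2 * (2 * π) ^ 2) := by
    intro k
    obtain ⟨h1, h2⟩ := elem_bound (pSq d k.1) (hw k) (hpos k) (hw_nonneg k)
    refine ⟨h1, h2.trans ?_⟩
    apply div_le_div_of_nonneg_left (by positivity) (by positivity)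
    have := pSq_ge d k
    linarith
  have hsumg : Summable (fun k : {k : Fin d → ℤ // k ≠ 0} =>
      hw k ^ 2 / (2 * (2 * π) ^ 2)) := hw_sq.div_const _
  have hsum : Summable (fun k : {k : Fin d → ℤ // k ≠ 0} =>
      pSq d k.1 + hw k - Real.sqrt (pSq d k.1 ^ 2 + 2 * pSq d k.1 * hw k)) :=
    Summable.of_nonneg_of_le (fun k => (hmain k).1) (fun k => (hmain k).2) hsumg
  refine ⟨fun x y hx hy => elem_bound x y hx hy, fun k => (hmain k).1, hsum, ?_, ?_⟩
  · have hle : ∑' k : {k : Fin d → ℤ // k ≠ 0},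
        (pSq d k.1 + hw k - Real.sqrt (pSq d k.1 ^ 2 + 2 * pSq d k.1 * hw k))
        ≤ ∑' k : {k : Fin d → ℤ // k ≠ 0}, hw k ^ 2 / (2 * (2 * π) ^ 2) :=
      Summable.tsum_le_tsum (fun k => (hmain k).2) hsum hsumg
    rw [tsum_div_const] at hle
    have h2 : (0:ℝ) < 2 * (2 * π) ^ 2 := by positivity
    rw [neg_mul, neg_mul, neg_le_neg_iff]
    calc (1/2) * ∑' k : {k : Fin d → ℤ // k ≠ 0},
          (pSq d k.1 + hw k - Real.sqrt (pSq d k.1 ^ 2 + 2 * pSq d k.1 * hw k))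
        ≤ (1/2) * ((∑' k, hw k ^ 2) / (2 * (2 * π) ^ 2)) := by
          apply mul_le_mul_of_nonneg_left hle (by norm_num)
      _ = (∑' k, hw k ^ 2) / (4 * (2 * π) ^ 2) := by ring
      _ = 1 / (4 * (2 * π) ^ 2) * ∑' k, hw k ^ 2 := by ring
  · have : 0 ≤ ∑' k : {k : Fin d → ℤ // k ≠ 0},
        (pSq d k.1 + hw k - Real.sqrt (pSq d k.1 ^ 2 + 2 * pSq d k.1 * hw k)) :=
      tsum_nonneg fun k => (hmain k).1
    nlinarith
end
end
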